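/- Let n ≥ 1, let A be a real symmetric n×n matrix, B a real symmetric positive definite n×n matrix, and ρ̃ > 0. Define Ω = {x ∈ ℝⁿ : xᵀBx ≤ 1}, Q(x) = xᵀAx − ρ̃‖x‖₀, and for ε > 0, Q_ε(x) = xᵀAx − (ρ̃ / log(1 + 1/ε)) Σᵢ log(1 + |xᵢ|/ε). Then for every ε ∈ (0, 1), sup_{x ∈ Ω} |Q_ε(x) − Q(x)| ≥ ρ̃; in particular, Q_ε does not converge uniformly to Q on Ω as ε → 0⁺, even though Q_ε(x) → Q(x) pointwise for every fixed x. -/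

import Mathlib

/-!
Write `s_ε(x) = (∑ i, log (1 + |xᵢ| / ε)) / log (1 + 1 / ε)`, so that `Q_ε - Q = ρ (‖x‖₀ - s_ε)`.
Pointwise convergence holds because `log (1 + a / ε) - log (1 + 1 / ε) = log ((ε + a) / (ε + 1))`
stays bounded while `log (1 + 1 / ε) → ∞`. For fixed `ε`, however, `s_ε` is continuous with
`s_ε(0) = 0`, whereas `‖t eᵢ‖₀ = 1` for `t ≠ 0`; since `Ω` is a compact neighbourhood of `0`, the
points `t eᵢ` with `t → 0` lie in `Ω` and the gap there tends to `|ρ|`.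
-/

open Matrix Filter Topology

noncomputable def logSumPenalty {ι : Type*} [Fintype ι] (ε : ℝ) (x : ι → ℝ) : ℝ :=
  (∑ i, Real.log (1 + |x i| / ε)) / Real.log (1 + 1 / ε)

lemma tendsto_log_one_add_one_div_nhdsGT_zero :
    Tendsto (fun ε : ℝ => Real.log (1 + 1 / ε)) (𝓝[>] 0) atTop := by
  simp only [one_div]
  exact Real.tendsto_log_atTop.comp (tendsto_atTop_add_const_left _ _ tendsto_inv_nhdsGT_zero)

lemma tendsto_log_one_add_div_div_log_one_add_one_div {a : ℝ} (ha : 0 < a) :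
    Tendsto (fun ε : ℝ => Real.log (1 + a / ε) / Real.log (1 + 1 / ε)) (𝓝[>] 0) (𝓝 1) := by
  have hquot : Tendsto (fun ε : ℝ => Real.log ((ε + a) / (ε + 1))) (𝓝[>] 0) (𝓝 (Real.log a)) := by
    have hcont : Tendsto (fun ε : ℝ => (ε + a) / (ε + 1)) (𝓝 0) (𝓝 ((0 + a) / (0 + 1))) :=
      (tendsto_id.add tendsto_const_nhds).div (tendsto_id.add tendsto_const_nhds) (by norm_num)
    rw [zero_add, zero_add, div_one] at hcont
    exact (hcont.mono_left nhdsWithin_le_nhds).log ha.ne'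
  have hlim := tendsto_const_nhds (x := (1 : ℝ)).add
    (hquot.div_atTop tendsto_log_one_add_one_div_nhdsGT_zero)
  rw [add_zero] at hlim
  refine hlim.congr' ?_
  filter_upwards [self_mem_nhdsWithin] with ε (hε : 0 < ε)
  have hL : 0 < Real.log (1 + 1 / ε) := Real.log_pos (by simp [hε])
  have hsplit : Real.log ((ε + a) / (ε + 1)) = Real.log (1 + a / ε) - Real.log (1 + 1 / ε) := by
    rw [← Real.log_div (by positivity) (by positivity)]
    congr 1
    field_simp
  rw [hsplit, sub_div, div_self hL.ne']
  ring

section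
variable {ι : Type*} [Fintype ι]

lemma tendsto_logSumPenalty (x : ι → ℝ) :
    Tendsto (fun ε => logSumPenalty ε x) (𝓝[>] 0)
      (𝓝 ((Finset.univ.filter (fun i => x i ≠ 0)).card : ℝ)) := by
  simp only [logSumPenalty, Finset.sum_div]
  rw [Finset.natCast_card_filter]
  refine tendsto_finsetSum _ fun i _ => ?_
  by_cases hx : x i = 0
  · simp [hx]
  · simpa [hx] using tendsto_log_one_add_div_div_log_one_add_one_div (abs_pos.mpr hx)

lemma continuous_logSumPenalty {ε : ℝ} (hε : 0 < ε) :
    Continuous (logSumPenalty (ι := ι) ε) := by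
  unfold logSumPenalty
  refine Continuous.div_const (continuous_finsetSum _ fun i _ => ?_) _
  refine Continuous.log (by fun_prop) fun x => ?_
  positivity

@[simp]
lemma logSumPenalty_zero (ε : ℝ) : logSumPenalty ε (0 : ι → ℝ) = 0 := by
  simp [logSumPenalty]

end

lemma exists_pos_mul_norm_sq_le {E : Type*} [NormedAddCommGroup E] [NormedSpace ℝ E]
    [ProperSpace E] [Nontrivial E] {f : E → ℝ} (hf : Continuous f)
    (hsmul : ∀ (c : ℝ) x, f (c • x) = c ^ 2 * f x) (hpos : ∀ x, x ≠ 0 → 0 < f x) :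
    ∃ m, 0 < m ∧ ∀ x, m * ‖x‖ ^ 2 ≤ f x := by
  obtain ⟨x₀, hx₀, hmin⟩ := (isCompact_sphere (0 : E) 1).exists_isMinOn
    (NormedSpace.sphere_nonempty.mpr zero_le_one) hf.continuousOn
  refine ⟨f x₀, hpos x₀ (ne_zero_of_mem_unit_sphere ⟨x₀, hx₀⟩), fun x => ?_⟩
  rcases eq_or_ne x 0 with rfl | hx
  · simpa using (hsmul 0 0).ge
  · have hnorm : 0 < ‖x‖ := norm_pos_iff.mpr hx
    have hunit : ‖x‖⁻¹ • x ∈ Metric.sphere (0 : E) 1 := by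
      simp [norm_smul, hnorm.ne']
    have hle : f x₀ ≤ f (‖x‖⁻¹ • x) := hmin hunit
    rw [hsmul] at hle
    calc f x₀ * ‖x‖ ^ 2 ≤ ‖x‖⁻¹ ^ 2 * f x * ‖x‖ ^ 2 := by gcongr
      _ = f x := by field_simp

lemma isCompact_setOf_dotProduct_mulVec_le {ι : Type*} [Fintype ι] [Nonempty ι]
    {B : Matrix ι ι ℝ} (hB : ∀ x : ι → ℝ, x ≠ 0 → 0 < x ⬝ᵥ B *ᵥ x) (r : ℝ) :
    IsCompact {x : ι → ℝ | x ⬝ᵥ B *ᵥ x ≤ r} := by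
  have hcont : Continuous fun x : ι → ℝ => x ⬝ᵥ B *ᵥ x := by fun_prop
  obtain ⟨m, hm, hcoer⟩ := exists_pos_mul_norm_sq_le hcont
    (fun c x => by simp only [smul_dotProduct, mulVec_smul, dotProduct_smul, smul_eq_mul]; ring) hB
  refine Metric.isCompact_of_isClosed_isBounded (isClosed_le hcont continuous_const) ?_
  refine (Metric.isBounded_closedBall (x := 0) (r := √(r / m))).subset fun x hx => ?_
  rw [mem_closedBall_zero_iff, ← abs_norm]
  refine Real.abs_le_sqrt ?_
  rw [le_div_iff₀ hm]
  linarith [hcoer x, hx.out]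

lemma setOf_dotProduct_mulVec_le_mem_nhds_zero {ι : Type*} [Fintype ι] (B : Matrix ι ι ℝ)
    {r : ℝ} (hr : 0 < r) : {x : ι → ℝ | x ⬝ᵥ B *ᵥ x ≤ r} ∈ 𝓝 0 :=
  ((show Continuous fun x : ι → ℝ => x ⬝ᵥ B *ᵥ x by fun_prop).tendsto 0).eventually
    (eventually_le_nhds (by simpa using hr))

lemma le_sSup_abs_card_support_sub_logSumPenalty {ι : Type*} [Fintype ι] [Nonempty ι]
    {K : Set (ι → ℝ)} (hK : IsCompact K) (hK0 : K ∈ 𝓝 0) (c : ℝ) {ε : ℝ} (hε : 0 < ε) :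
    |c| ≤ sSup {v | ∃ x ∈ K,
      v = |c| * |((Finset.univ.filter (fun i => x i ≠ 0)).card : ℝ) - logSumPenalty ε x|} := by
  obtain ⟨M, hM⟩ := hK.exists_bound_of_continuousOn (continuous_logSumPenalty hε).continuousOn
  have hbdd : BddAbove {v | ∃ x ∈ K,
      v = |c| * |((Finset.univ.filter (fun i => x i ≠ 0)).card : ℝ) - logSumPenalty ε x|} := by
    refine ⟨|c| * (Fintype.card ι + M), ?_⟩
    rintro v ⟨x, hx, rfl⟩
    gcongr
    refine (abs_sub _ _).trans (add_le_add ?_ (hM x hx))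
    rw [Nat.abs_cast]
    exact_mod_cast Finset.card_le_univ _
  classical
  obtain ⟨i₀⟩ := ‹Nonempty ι›
  have hsingle : Tendsto (fun t : ℝ => Pi.single i₀ t) (𝓝 0) (𝓝 (0 : ι → ℝ)) := by
    simpa using (continuous_single (A := fun _ : ι => ℝ) i₀).tendsto 0
  have hlim : Tendsto (fun t : ℝ => |c| * |1 - logSumPenalty ε (Pi.single i₀ t : ι → ℝ)|)
      (𝓝[≠] 0) (𝓝 |c|) := by
    have := ((continuous_logSumPenalty hε).tendsto _).comp hsingle
    simpa using (((tendsto_const_nhds (x := (1 : ℝ))).sub this).abs.const_mul |c|).mono_left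
      nhdsWithin_le_nhds
  refine le_of_tendsto hlim ?_
  filter_upwards [self_mem_nhdsWithin, (hsingle.mono_left nhdsWithin_le_nhds) hK0]
    with t (ht : t ≠ 0) hmem
  refine le_csSup hbdd ⟨_, hmem, ?_⟩
  have hsupp : (Finset.univ.filter fun i => (Pi.single i₀ t : ι → ℝ) i ≠ 0) = {i₀} := by
    ext i
    simp [Pi.single_apply, ht]
  simp [hsupp]

theorem stmt_8_general (n : ℕ) (hn : 1 ≤ n) (A B : Matrix (Fin n) (Fin n) ℝ)
    (hBpd : ∀ x : Fin n → ℝ, x ≠ 0 → 0 < x ⬝ᵥ B *ᵥ x)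
    (ρ : ℝ) :
    (∀ ε : ℝ, ε ∈ Set.Ioo (0 : ℝ) 1 →
      ρ ≤ sSup {v : ℝ | ∃ x : Fin n → ℝ, x ⬝ᵥ B *ᵥ x ≤ 1 ∧
        v = |(x ⬝ᵥ A *ᵥ x - (ρ / Real.log (1 + 1 / ε)) * ∑ i, Real.log (1 + |x i| / ε))
             - (x ⬝ᵥ A *ᵥ x - ρ * ((Finset.univ.filter (fun i => x i ≠ 0)).card : ℝ))|}) ∧
    (∀ x : Fin n → ℝ, Filter.Tendsto
        (fun ε : ℝ =>
          x ⬝ᵥ A *ᵥ x - (ρ / Real.log (1 + 1 / ε)) * ∑ i, Real.log (1 + |x i| / ε))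
        (nhdsWithin 0 (Set.Ioi 0))
        (nhds (x ⬝ᵥ A *ᵥ x - ρ * ((Finset.univ.filter (fun i => x i ≠ 0)).card : ℝ)))) := by
  have : Nonempty (Fin n) := ⟨⟨0, hn⟩⟩
  have hpenalty (ε : ℝ) (x : Fin n → ℝ) :
      ρ / Real.log (1 + 1 / ε) * ∑ i, Real.log (1 + |x i| / ε) = ρ * logSumPenalty ε x := by
    rw [logSumPenalty, mul_div_assoc', div_mul_eq_mul_div]
  refine ⟨fun ε hε => ?_, fun x => ?_⟩
  · refine (le_abs_self ρ).trans <| (le_sSup_abs_card_support_sub_logSumPenalty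
      (isCompact_setOf_dotProduct_mulVec_le hBpd 1)
      (setOf_dotProduct_mulVec_le_mem_nhds_zero B one_pos) ρ hε.1).trans_eq ?_
    congr 1
    ext v
    refine exists_congr fun x => and_congr_right fun _ => ?_
    rw [hpenalty, sub_sub_sub_cancel_left, ← mul_sub, abs_mul]
  · simp only [hpenalty]
    exact tendsto_const_nhds.sub ((tendsto_logSumPenalty x).const_mul ρ)

/-- Q_ε does not converge uniformly to Q on Ω = {x : xᵀBx ≤ 1}: for every ε ∈ (0,1),
    sup_{x ∈ Ω} |Q_ε(x) − Q(x)| ≥ ρ̃, even though Q_ε → Q pointwise as ε → 0⁺. -/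
theorem stmt_8 (n : ℕ) (hn : 1 ≤ n) (A B : Matrix (Fin n) (Fin n) ℝ)
    (hA : A.IsSymm) (hB : B.IsSymm)
    (hBpd : ∀ x : Fin n → ℝ, x ≠ 0 → 0 < x ⬝ᵥ B *ᵥ x)
    (ρ : ℝ) (hρ : 0 < ρ) :
    (∀ ε : ℝ, ε ∈ Set.Ioo (0 : ℝ) 1 →
      ρ ≤ sSup {v : ℝ | ∃ x : Fin n → ℝ, x ⬝ᵥ B *ᵥ x ≤ 1 ∧
        v = |(x ⬝ᵥ A *ᵥ x - (ρ / Real.log (1 + 1 / ε)) * ∑ i, Real.log (1 + |x i| / ε))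
             - (x ⬝ᵥ A *ᵥ x - ρ * ((Finset.univ.filter (fun i => x i ≠ 0)).card : ℝ))|}) ∧
    (∀ x : Fin n → ℝ, Filter.Tendsto
        (fun ε : ℝ =>
          x ⬝ᵥ A *ᵥ x - (ρ / Real.log (1 + 1 / ε)) * ∑ i, Real.log (1 + |x i| / ε))
        (nhdsWithin 0 (Set.Ioi 0))
        (nhds (x ⬝ᵥ A *ᵥ x - ρ * ((Finset.univ.filter (fun i => x i ≠ 0)).card : ℝ)))) :=
  stmt_8_general n hn A B hBpd ρ
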